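/- arXiv:1407.3645 — 3 statements merged into one kernel-verified Lean document; each statement's English description precedes it below -/
import Mathlib

section
/- Let (M,𝓜,m) be a probability space, let D₀ ⊇ D₁ ⊇ D₂ ⊇ … be a decreasing sequence of measurable sets with lim_{N→∞} m(D_N) = 0, let 𝓘 ⊆ 𝓜 be a sub-σ-algebra, and define 𝓖_N := 𝓘 ∨ σ({A ∈ 𝓜 : A ⊆ D_N}) and 𝓝 := {A ∈ 𝓜 : m(A) = 0}. Then ⋂_{N=0}^∞ (𝓖_N ∨ 𝓝) ⊆ 𝓘 ∨ 𝓝. -/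
/-!
A set `A` on the left is, for every `N`, equal off `D N` and up to a null set to some
`𝓘`-measurable `B N`, so `μ (A ∆ B N) ≤ μ (D N)`. Along a subsequence these measures are
summable, and Borel–Cantelli makes `A` a.e. equal to the `𝓘`-measurable set `limsup B`;
`A` then differs from it by a measurable null set.
-/

open MeasureTheory Filter

namespace MeasureTheory

variable {M : Type*}

abbrev aeClosure {mM : MeasurableSpace M} (𝓘 : MeasurableSpace M) (ν : Measure[mM] M) :
    MeasurableSpace M where
  MeasurableSet' A := ∃ B, MeasurableSet[𝓘] B ∧ A =ᵐ[ν] B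
  measurableSet_empty := ⟨∅, @MeasurableSet.empty _ 𝓘, .rfl⟩
  measurableSet_compl _ := fun ⟨B, hB, hAB⟩ => ⟨Bᶜ, hB.compl, hAB.compl⟩
  measurableSet_iUnion _ hA := by
    choose B hB hAB using hA
    exact ⟨⋃ i, B i, .iUnion hB, Filter.EventuallyEq.countable_iUnion hAB⟩

section aeClosure

variable {𝓘 mM : MeasurableSpace M}

theorem le_aeClosure (ν : Measure M) : 𝓘 ≤ aeClosure 𝓘 ν :=
  fun A hA => ⟨A, hA, .rfl⟩

theorem generateFrom_null_le_aeClosure (ν : Measure M) :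
    MeasurableSpace.generateFrom {A : Set M | MeasurableSet A ∧ ν A = 0} ≤ aeClosure 𝓘 ν :=
  MeasurableSpace.generateFrom_le fun _ hA => ⟨∅, @MeasurableSet.empty _ 𝓘, ae_eq_empty.mpr hA.2⟩

theorem generateFrom_subset_le_aeClosure_restrict_compl (μ : Measure M) (S : Set M) :
    MeasurableSpace.generateFrom {A : Set M | MeasurableSet A ∧ A ⊆ S} ≤
      aeClosure 𝓘 (μ.restrict Sᶜ) :=
  MeasurableSpace.generateFrom_le fun A hA => ⟨∅, @MeasurableSet.empty _ 𝓘, ae_eq_empty.mpr <| by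
    rw [Measure.restrict_apply hA.1, ← Set.sdiff_eq, Set.sdiff_eq_empty.mpr hA.2, measure_empty]⟩

theorem sup_generateFrom_le_aeClosure_restrict_compl (μ : Measure M) (S : Set M) :
    𝓘 ⊔ MeasurableSpace.generateFrom {A : Set M | MeasurableSet A ∧ A ⊆ S} ⊔
        MeasurableSpace.generateFrom {A : Set M | MeasurableSet A ∧ μ A = 0} ≤
      aeClosure 𝓘 (μ.restrict Sᶜ) := by
  refine sup_le (sup_le (le_aeClosure _) (generateFrom_subset_le_aeClosure_restrict_compl μ S)) ?_
  refine le_trans (MeasurableSpace.generateFrom_mono ?_) (generateFrom_null_le_aeClosure _)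
  exact fun A hA => ⟨hA.1, nonpos_iff_eq_zero.mp (hA.2 ▸ Measure.restrict_apply_le _ A)⟩

theorem measure_symmDiff_le_of_ae_eq_restrict_compl {μ : Measure M} {A B S : Set M}
    (h : A =ᵐ[μ.restrict Sᶜ] B) : μ (symmDiff A B) ≤ μ S :=
  calc μ (symmDiff A B) ≤ μ (symmDiff A B ∩ S) + μ (symmDiff A B \ S) :=
        measure_le_inter_add_sdiff μ _ S
    _ ≤ μ S + 0 := by
        gcongr
        · exact Set.inter_subset_right
        · exact le_of_le_of_eq (Measure.le_restrict_apply _ _) (measure_symmDiff_eq_zero_iff.mpr h)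
    _ = μ S := add_zero _

/-- By Borel–Cantelli, almost every point lies in only finitely many `A ∆ B k`. -/
theorem ae_eq_limsup_of_tsum_measure_symmDiff_ne_top {μ : Measure M} {A : Set M}
    {B : ℕ → Set M} (h : ∑' k, μ (symmDiff A (B k)) ≠ ⊤) : A =ᵐ[μ] (limsup B atTop : Set M) := by
  filter_upwards [ae_eventually_notMem h] with x hx
  have hAB : ∀ᶠ k in atTop, (x ∈ B k ↔ x ∈ A) := hx.mono fun k hk => by
    simpa [Set.mem_symmDiff, iff_def, or_comm] using hk
  have hx_limsup : x ∈ limsup B atTop ↔ x ∈ A := by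
    rw [mem_limsup_iff_frequently_mem, frequently_congr hAB, frequently_const]
  exact propext hx_limsup.symm

theorem measurableSet_aeClosure_of_tendsto {μ : Measure M} {A : Set M} {ε : ℕ → ENNReal}
    (hε : Tendsto ε atTop (nhds 0))
    (hA : ∀ N, ∃ B, MeasurableSet[𝓘] B ∧ μ (symmDiff A B) ≤ ε N) :
    MeasurableSet[aeClosure 𝓘 μ] A := by
  obtain ⟨δ, hδ_pos, hδ_sum⟩ := ENNReal.exists_pos_sum_of_countable one_ne_zero ℕ
  have hN : ∀ k, ∃ N, ε N ≤ δ k := fun k =>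
    (hε.eventually (ge_mem_nhds (ENNReal.coe_pos.mpr (hδ_pos k)))).exists
  choose N hN using hN
  choose B hB hAB using fun k => hA (N k)
  refine ⟨limsup B atTop, @MeasurableSet.measurableSet_limsup _ 𝓘 _ hB,
    ae_eq_limsup_of_tsum_measure_symmDiff_ne_top (ne_top_of_le_ne_top
      (hδ_sum.trans ENNReal.one_lt_top).ne (ENNReal.tsum_le_tsum fun k => (hAB k).trans (hN k)))⟩

theorem measurableSet_sup_generateFrom_null_of_aeClosure {μ : Measure M} (h𝓘 : 𝓘 ≤ mM)
    {A : Set M} (hA : MeasurableSet A) (hA' : MeasurableSet[aeClosure 𝓘 μ] A) :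
    MeasurableSet[𝓘 ⊔ MeasurableSpace.generateFrom {A : Set M | MeasurableSet A ∧ μ A = 0}] A := by
  obtain ⟨B, hB, hAB⟩ := hA'
  have hnull : μ (symmDiff B A) = 0 := measure_symmDiff_eq_zero_iff.mpr hAB.symm
  have hsplit : MeasurableSet[𝓘 ⊔ MeasurableSpace.generateFrom
      {A : Set M | MeasurableSet A ∧ μ A = 0}] (symmDiff B (symmDiff B A)) :=
    (le_sup_left (a := 𝓘) B hB).symmDiff
      (le_sup_right (a := 𝓘) _ (MeasurableSpace.measurableSet_generateFrom
        ⟨(h𝓘 B hB).symmDiff hA, hnull⟩))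
  rwa [symmDiff_symmDiff_cancel_left] at hsplit

end aeClosure

end MeasureTheory

theorem stmt8_general {M : Type*} [mM : MeasurableSpace M] (μ : Measure M)
    (D : ℕ → Set M)
    (hlim : Filter.Tendsto (fun N => μ (D N)) Filter.atTop (nhds 0))
    (𝓘 : MeasurableSpace M) (h𝓘 : 𝓘 ≤ mM) :
    (⨅ N : ℕ, (𝓘 ⊔ MeasurableSpace.generateFrom {A : Set M | MeasurableSet[mM] A ∧ A ⊆ D N}) ⊔
        MeasurableSpace.generateFrom {A : Set M | MeasurableSet[mM] A ∧ μ A = 0}) ≤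
      𝓘 ⊔ MeasurableSpace.generateFrom {A : Set M | MeasurableSet[mM] A ∧ μ A = 0} := by
  intro A hA
  rw [MeasurableSpace.measurableSet_iInf] at hA
  have hA_meas : MeasurableSet[mM] A :=
    sup_le (sup_le h𝓘 (MeasurableSpace.generateFrom_le fun _ hS => hS.1))
      (MeasurableSpace.generateFrom_le fun _ hS => hS.1) A (hA 0)
  refine measurableSet_sup_generateFrom_null_of_aeClosure h𝓘 hA_meas
    (measurableSet_aeClosure_of_tendsto hlim fun N => ?_)
  obtain ⟨B, hB, hAB⟩ := sup_generateFrom_le_aeClosure_restrict_compl μ (D N) A (hA N)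
  exact ⟨B, hB, measure_symmDiff_le_of_ae_eq_restrict_compl hAB⟩

/-- Let `(M,𝓜,m)` be a probability space, `D₀ ⊇ D₁ ⊇ …` measurable sets with
`m (D N) → 0`, `𝓘 ⊆ 𝓜` a sub-σ-algebra, `𝓖_N := 𝓘 ∨ σ(A ∈ 𝓜 : A ⊆ D N)` and
`𝓝 := σ(A ∈ 𝓜 : m A = 0)`. Then `⋂_N (𝓖_N ∨ 𝓝) ⊆ 𝓘 ∨ 𝓝`. -/
theorem stmt8 {M : Type*} [mM : MeasurableSpace M] (μ : Measure M) [IsProbabilityMeasure μ]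
    (D : ℕ → Set M) (hDmeas : ∀ N, MeasurableSet (D N)) (hDanti : Antitone D)
    (hlim : Filter.Tendsto (fun N => μ (D N)) Filter.atTop (nhds 0))
    (𝓘 : MeasurableSpace M) (h𝓘 : 𝓘 ≤ mM) :
    (⨅ N : ℕ, (𝓘 ⊔ MeasurableSpace.generateFrom {A : Set M | MeasurableSet[mM] A ∧ A ⊆ D N}) ⊔
        MeasurableSpace.generateFrom {A : Set M | MeasurableSet[mM] A ∧ μ A = 0}) ≤
      𝓘 ⊔ MeasurableSpace.generateFrom {A : Set M | MeasurableSet[mM] A ∧ μ A = 0} :=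
  stmt8_general (mM := mM) μ D hlim 𝓘 h𝓘
end

section
/- Assume the refining-partition setup on the probability space (T,𝒯,τ) with countable group 𝔾 of automorphisms of T. Let E ⊆ T be locally ergodic with respect to 𝔾 and let F ∈ 𝒪(T) be nonempty with F ⊆ E. Then F is locally ergodic with respect to 𝔾. -/
open MeasureTheory

/-- The σ-algebra `𝒯_N` generated by the level-`N` partition `T_{N,1},…,T_{N,L_N}`. -/
def levelSigma {T : Type*} {L : ℕ → ℕ} (P : (N : ℕ) → Fin (L N) → Set T) (N : ℕ) :
    MeasurableSpace T :=
  MeasurableSpace.generateFrom (Set.range (P N))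

/-- `E` is finite locally ergodic with respect to the group `𝔾`:
`τ E > 0` and there is `N_E` with `E ∈ 𝒯_{N_E}` such that for every `N ≥ N_E` and every
`A = T_{N,l} ∪ T_{N,m} ⊆ E` with `l ≠ m` there is a subgroup `ℍ ≤ 𝔾` acting as the identity
outside `A` and such that `(A, I(ℍ|_A), τ_A)` is trivial, i.e. every measurable `B ⊆ A`
which is invariant under all `g ∈ ℍ` has `τ B = 0` or `τ (A \ B) = 0`. -/
def FiniteLocallyErgodic {T : Type*} [MeasurableSpace T] (τ : Measure T)
    {L : ℕ → ℕ} (P : (N : ℕ) → Fin (L N) → Set T) (𝔾 : Subgroup (Equiv.Perm T))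
    (E : Set T) : Prop :=
  0 < τ E ∧ ∃ NE : ℕ, MeasurableSet[levelSigma P NE] E ∧
    ∀ N, NE ≤ N → ∀ l m : Fin (L N), l ≠ m → P N l ∪ P N m ⊆ E →
      ∃ ℍ : Subgroup (Equiv.Perm T), ℍ ≤ 𝔾 ∧
        (∀ g ∈ ℍ, ∀ t, t ∉ P N l ∪ P N m → (g : Equiv.Perm T) t = t) ∧
        ∀ B : Set T, MeasurableSet B → B ⊆ P N l ∪ P N m →
          (∀ g ∈ ℍ, ((g : Equiv.Perm T) : T → T) ⁻¹' B = B) →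
            τ B = 0 ∨ τ ((P N l ∪ P N m) \ B) = 0

/-- `E` is locally ergodic with respect to `𝔾`: `E` is the union of an increasing sequence of
finite locally ergodic sets. -/
def LocallyErgodic {T : Type*} [MeasurableSpace T] (τ : Measure T)
    {L : ℕ → ℕ} (P : (N : ℕ) → Fin (L N) → Set T) (𝔾 : Subgroup (Equiv.Perm T))
    (E : Set T) : Prop :=
  ∃ Ej : ℕ → Set T, Monotone Ej ∧ (∀ j, FiniteLocallyErgodic τ P 𝔾 (Ej j)) ∧
    (⋃ j, Ej j) = E

/-- `G ∈ 𝒪(T)`: `G` is a countable union of partition elements (or empty). -/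
def IsPartitionOpen {T : Type*} {L : ℕ → ℕ} (P : (N : ℕ) → Fin (L N) → Set T)
    (G : Set T) : Prop :=
  G = ∅ ∨ ∃ u : ℕ → Set T, (∀ j, ∃ N, ∃ l : Fin (L N), u j = P N l) ∧ G = ⋃ j, u j

lemma atom_subset_or_disjoint {T : Type*} {L : ℕ → ℕ} {P : (N : ℕ) → Fin (L N) → Set T}
    (hdisj : ∀ N, ∀ l m : Fin (L N), l ≠ m → Disjoint (P N l) (P N m))
    {N : ℕ} (l : Fin (L N)) {S : Set T} (hS : MeasurableSet[levelSigma P N] S) :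
    P N l ⊆ S ∨ Disjoint (P N l) S := by
  classical
  induction hS with
  | basic u hu =>
      obtain ⟨m, rfl⟩ := hu
      by_cases h : l = m
      · exact Or.inl (h ▸ subset_rfl)
      · exact Or.inr (hdisj N l m h)
  | empty => exact Or.inr (Set.disjoint_empty _)
  | compl u _ ih =>
      rcases ih with h | h
      · exact Or.inr (Set.disjoint_left.mpr fun x hx hxc => hxc (h hx))
      · exact Or.inl fun x hx => Set.disjoint_left.mp h hx
  | iUnion f _ ih =>
      by_cases h : ∃ i, P N l ⊆ f i
      · obtain ⟨i, hi⟩ := h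
        exact Or.inl (hi.trans (Set.subset_iUnion _ i))
      · push_neg at h
        refine Or.inr (Set.disjoint_left.mpr fun x hx hxU => ?_)
        obtain ⟨i, hxi⟩ := Set.mem_iUnion.mp hxU
        rcases ih i with hi | hi
        · exact h i hi
        · exact Set.disjoint_left.mp hi hx hxi

lemma atom_subset {T : Type*} {L : ℕ → ℕ} {P : (N : ℕ) → Fin (L N) → Set T}
    (hdisj : ∀ N, ∀ l m : Fin (L N), l ≠ m → Disjoint (P N l) (P N m))
    {N : ℕ} {l : Fin (L N)} {S : Set T} (hS : MeasurableSet[levelSigma P N] S)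
    {t : T} (ht : t ∈ P N l) (htS : t ∈ S) : P N l ⊆ S := by
  rcases atom_subset_or_disjoint hdisj l hS with h | h
  · exact h
  · exact absurd htS (Set.disjoint_left.mp h ht)

/-- in the refining-partition setup with countable group `𝔾` of bi-measurable
bijections of `T`, if `E` is locally ergodic with respect to `𝔾` and `F ∈ 𝒪(T)` is nonempty
with `F ⊆ E`, then `F` is locally ergodic with respect to `𝔾`. -/
theorem stmt10 {T : Type*} [mT : MeasurableSpace T]
    (τ : Measure T) [IsProbabilityMeasure τ]
    (L : ℕ → ℕ) (P : (N : ℕ) → Fin (L N) → Set T)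
    (hcover : ∀ N, (⋃ l, P N l) = Set.univ)
    (hdisj : ∀ N, ∀ l m : Fin (L N), l ≠ m → Disjoint (P N l) (P N m))
    (hpos : ∀ N l, 0 < τ (P N l))
    (hrefine : Monotone (levelSigma P))
    (hsmall : Filter.Tendsto (fun N => ⨆ l : Fin (L N), τ (P N l)) Filter.atTop (nhds 0))
    (hgen : (⨆ N, levelSigma P N) = mT)
    (𝔾 : Subgroup (Equiv.Perm T)) (hcount : (𝔾 : Set (Equiv.Perm T)).Countable)
    (hGmeas : ∀ g ∈ 𝔾, Measurable ((g : Equiv.Perm T) : T → T))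
    (E F : Set T) (hE : LocallyErgodic τ P 𝔾 E)
    (hF : IsPartitionOpen P F) (hFne : F.Nonempty) (hFE : F ⊆ E) :
    LocallyErgodic τ P 𝔾 F := by
  classical
  obtain ⟨Ej, hEmono, hFLE, hEunion⟩ := hE
  -- every point of F lies in an atom contained in F and in some Ej
  have hatom : ∀ t ∈ F, ∃ i : Σ N : ℕ, Fin (L N),
      t ∈ P i.1 i.2 ∧ P i.1 i.2 ⊆ F ∧ ∃ j, P i.1 i.2 ⊆ Ej j := by
    intro t ht
    rcases hF with hemp | ⟨u, hu, hFu⟩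
    · exact absurd (hemp ▸ ht) (Set.notMem_empty t)
    have ht' : t ∈ ⋃ j, u j := hFu ▸ ht
    obtain ⟨i0, hti0⟩ := Set.mem_iUnion.mp ht'
    obtain ⟨N0, l0, hul⟩ := hu i0
    have htE : t ∈ ⋃ j, Ej j := hEunion ▸ hFE ht
    obtain ⟨j, htj⟩ := Set.mem_iUnion.mp htE
    obtain ⟨-, NEj, hEjmeas, -⟩ := hFLE j
    set M := max N0 NEj with hM
    obtain ⟨l, htl⟩ : ∃ l, t ∈ P M l := by
      have := (hcover M).symm ▸ (Set.mem_univ t)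
      exact Set.mem_iUnion.mp this
    have hmeas0 : MeasurableSet[levelSigma P M] (P N0 l0) :=
      hrefine (le_max_left _ _) _ (MeasurableSpace.measurableSet_generateFrom ⟨l0, rfl⟩)
    have hmeasE : MeasurableSet[levelSigma P M] (Ej j) :=
      hrefine (le_max_right _ _) _ hEjmeas
    have h1 : P M l ⊆ P N0 l0 := atom_subset hdisj hmeas0 htl (hul ▸ hti0)
    have h2 : P M l ⊆ Ej j := atom_subset hdisj hmeasE htl htj
    have hPF : P M l ⊆ F := by
      rw [hFu]; exact (h1.trans (hul ▸ subset_rfl)).trans (Set.subset_iUnion u i0)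
    exact ⟨⟨M, l⟩, htl, hPF, j, h2⟩
  -- good atoms
  let Good : (Σ N : ℕ, Fin (L N)) → Prop :=
    fun i => P i.1 i.2 ⊆ F ∧ ∃ j, P i.1 i.2 ⊆ Ej j
  have hGne : Nonempty {i // Good i} := by
    obtain ⟨t, ht⟩ := hFne
    obtain ⟨i, -, h1, h2⟩ := hatom t ht
    exact ⟨⟨i, h1, h2⟩⟩
  obtain ⟨e, he⟩ := exists_surjective_nat {i // Good i}
  -- enumerated atoms
  set v : ℕ → Set T := fun n => P (e n).1.1 (e n).1.2 with hv
  have hvF : ∀ n, v n ⊆ F := fun n => (e n).2.1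
  have hvE : ∀ n, ∃ j, v n ⊆ Ej j := fun n => (e n).2.2
  set jsel : ℕ → ℕ := fun n => Classical.choose (hvE n) with hjsel
  have hjsel' : ∀ n, v n ⊆ Ej (jsel n) := fun n => Classical.choose_spec (hvE n)
  -- the increasing sequence
  refine ⟨fun k => ⋃ n ∈ Finset.range (k+1), v n, ?_, ?_, ?_⟩
  · intro a b hab
    exact Set.biUnion_subset_biUnion_left (fun n hn =>
      Finset.mem_range.mpr (lt_of_lt_of_le (Finset.mem_range.mp hn) (by omega)))
  · intro k
    -- data for F^k
    set Jk : ℕ := (Finset.range (k+1)).sup jsel with hJk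
    obtain ⟨-, NEJ, hmeasJ, hpair⟩ := hFLE Jk
    set Mk : ℕ := (Finset.range (k+1)).sup (fun n => (e n).1.1) with hMk
    set NEk : ℕ := max Mk NEJ with hNEk
    have hFkE : (⋃ n ∈ Finset.range (k+1), v n) ⊆ Ej Jk := by
      refine Set.iUnion₂_subset fun n hn => (hjsel' n).trans (hEmono ?_)
      exact Finset.le_sup hn
    refine ⟨?_, NEk, ?_, ?_⟩
    · -- positive measure
      refine lt_of_lt_of_le (hpos (e 0).1.1 (e 0).1.2) (measure_mono fun x hx => ?_)
      exact Set.mem_biUnion (Finset.mem_range.mpr (Nat.succ_pos k)) hx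
    · -- measurability at level NEk
      refine Finset.measurableSet_biUnion _ fun n hn => ?_
      refine hrefine ?_ _ (MeasurableSpace.measurableSet_generateFrom ⟨(e n).1.2, rfl⟩)
      exact le_trans (Finset.le_sup (f := fun n => (e n).1.1) hn) (le_max_left _ _)
    · -- pair condition
      intro N hN l m hlm hA
      exact hpair N (le_trans (le_max_right _ _) hN) l m hlm (hA.trans hFkE)
  · -- union equals F
    apply Set.Subset.antisymm
    · exact Set.iUnion_subset fun k => Set.iUnion₂_subset fun n _ => hvF n
    · intro t ht
      obtain ⟨i, hti, h1, h2⟩ := hatom t ht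
      obtain ⟨n, hn⟩ := he ⟨i, h1, h2⟩
      refine Set.mem_iUnion.mpr ⟨n, Set.mem_biUnion (Finset.mem_range.mpr (Nat.lt_succ_self n)) ?_⟩
      have hval : ((e n : {i // Good i}) : Σ N : ℕ, Fin (L N)) = i := by rw [hn]
      show t ∈ P (e n).1.1 (e n).1.2
      rw [hval]
      exact hti
end

section
/- Every nonempty set E ∈ 𝒪((0,1]) (i.e. every nonempty countable union of half-open dyadic intervals) is locally ergodic with respect to the group Perm^dyad_E of dyadic measure-preserving permutations that are the identity on E^c, where local ergodicity is understood with respect to the dyadic refining-partition structure of ((0,1], ℬ((0,1]), λ) with λ the Lebesgue measure. -/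
open MeasureTheory

/-- The `k`-th dyadic interval of level `d` (1-indexed): `I_k^d = ((k-1)/2^d, k/2^d]`. -/
def dyadI (d k : ℕ) : Set ℝ := Set.Ioc (((k : ℝ) - 1) / 2 ^ d) ((k : ℝ) / 2 ^ d)

/-- `g` is a dyadic permutation of `(0,1]` (extended to `ℝ` by the identity outside `(0,1]`):
for some `d ≥ 0` and some permutation `π` of the level-`d` dyadic intervals (indexed here by
`Fin (2^d)`, i.e. `0`-based), `g` shifts `I_{k+1}^d` onto `I_{π(k)+1}^d`. -/
def IsDyadicPerm (g : ℝ → ℝ) : Prop :=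
  (∀ t ∉ Set.Ioc (0 : ℝ) 1, g t = t) ∧
  ∃ d : ℕ, ∃ π : Equiv.Perm (Fin (2 ^ d)),
    ∀ k : Fin (2 ^ d), ∀ t ∈ dyadI d ((k : ℕ) + 1),
      g t = (((π k : ℕ) : ℝ) + 1) / 2 ^ d - (((k : ℕ) + 1 : ℝ) / 2 ^ d - t)

/-- `ℍ` is a group of maps under composition. -/
def IsMapGroup (ℍ : Set (ℝ → ℝ)) : Prop :=
  id ∈ ℍ ∧ (∀ g ∈ ℍ, ∀ h ∈ ℍ, g ∘ h ∈ ℍ) ∧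
    ∀ g ∈ ℍ, ∃ g' ∈ ℍ, g ∘ g' = id ∧ g' ∘ g = id

/-- `E` is finite locally ergodic with respect to the set of maps `𝔾` of `(0,1]`, relative to
the dyadic refining-partition structure of `((0,1], ℬ((0,1]), λ)`. -/
def FiniteLocallyErgodicDyad (𝔾 : Set (ℝ → ℝ)) (E : Set ℝ) : Prop :=
  0 < volume E ∧
  ∃ NE : ℕ, (∃ s : Finset (Fin (2 ^ NE)), E = ⋃ k ∈ s, dyadI NE ((k : ℕ) + 1)) ∧
    ∀ N, NE ≤ N → ∀ l m : Fin (2 ^ N), l ≠ m →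
      dyadI N ((l : ℕ) + 1) ∪ dyadI N ((m : ℕ) + 1) ⊆ E →
      ∃ ℍ ⊆ 𝔾, IsMapGroup ℍ ∧
        (∀ g ∈ ℍ, ∀ t, t ∉ dyadI N ((l : ℕ) + 1) ∪ dyadI N ((m : ℕ) + 1) → g t = t) ∧
        ∀ B : Set ℝ, MeasurableSet B →
          B ⊆ dyadI N ((l : ℕ) + 1) ∪ dyadI N ((m : ℕ) + 1) →
          (∀ g ∈ ℍ, g ⁻¹' B = B) →
          volume B = 0 ∨
            volume ((dyadI N ((l : ℕ) + 1) ∪ dyadI N ((m : ℕ) + 1)) \ B) = 0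

/-- `E` is locally ergodic with respect to `𝔾`: `E` is the union of an increasing sequence of
finite locally ergodic sets. -/
def LocallyErgodicDyad (𝔾 : Set (ℝ → ℝ)) (E : Set ℝ) : Prop :=
  ∃ Ej : ℕ → Set ℝ, Monotone Ej ∧ (∀ j, FiniteLocallyErgodicDyad 𝔾 (Ej j)) ∧
    (⋃ j, Ej j) = E

/-- `E ∈ 𝒪((0,1])`: `E` is a countable union of half-open dyadic intervals (or empty). -/
def IsDyadOpen (E : Set ℝ) : Prop :=
  E = ∅ ∨ ∃ u : ℕ → Set ℝ,
    (∀ j, ∃ N : ℕ, ∃ k : Fin (2 ^ N), u j = dyadI N ((k : ℕ) + 1)) ∧ E = ⋃ j, u j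

/-!
Let `A = I_l^N ∪ I_m^N` and let `B ⊆ A` be a Borel set invariant under every dyadic permutation
supported in `A`. For `M ≥ N`, the permutation swapping two level-`M` subintervals of `A`
translates one onto the other, so `B` meets all of them in the same measure. Hence the finite
measures `λ(A) • λ|_B` and `λ(B) • λ|_A` agree on all dyadic intervals of level `≥ N`, hence on
every `Iic x` (approximate `x` from above by dyadic points), and evaluating them at `B` gives
`λ(B) ∈ {0, λ(A)}`. These permutations form a group because a level-`d` dyadic permutation is
also one of every level `d + e`. Finally, `E = ⋃ u_j` is the increasing union of the finite
unions `u_0 ∪ ⋯ ∪ u_j`, each of which is a union of dyadic intervals of a common level.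
-/

open Set
open scoped ENNReal

lemma dyadI_succ (d k : ℕ) : dyadI d (k + 1) = Ioc ((k : ℝ) / 2 ^ d) ((k + 1 : ℝ) / 2 ^ d) := by
  simp [dyadI]

lemma measurableSet_dyadI (d k : ℕ) : MeasurableSet (dyadI d k) := measurableSet_Ioc

lemma volume_dyadI (d k : ℕ) : volume (dyadI d k) = ENNReal.ofReal (1 / 2 ^ d) := by
  rw [dyadI, Real.volume_Ioc]
  ring_nf

lemma dyadI_subset_Ioc {d : ℕ} (k : Fin (2 ^ d)) : dyadI d (k + 1) ⊆ Ioc 0 1 := by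
  have hk : (k : ℝ) + 1 ≤ 2 ^ d := by exact_mod_cast k.2
  rw [dyadI_succ]
  exact Ioc_subset_Ioc (by positivity) ((div_le_one (by positivity)).2 hk)

lemma eq_of_mem_dyadI {d k j : ℕ} {t : ℝ} (hk : t ∈ dyadI d (k + 1))
    (hj : t ∈ dyadI d (j + 1)) : k = j := by
  rw [dyadI_succ] at hk hj
  have hkj : (k : ℝ) < j + 1 :=
    (div_lt_div_iff_of_pos_right (by positivity)).1 (hk.1.trans_le hj.2)
  have hjk : (j : ℝ) < k + 1 :=
    (div_lt_div_iff_of_pos_right (by positivity)).1 (hj.1.trans_le hk.2)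
  have : k < j + 1 := by exact_mod_cast hkj
  have : j < k + 1 := by exact_mod_cast hjk
  omega

lemma disjoint_dyadI {d k j : ℕ} (h : k ≠ j) : Disjoint (dyadI d (k + 1)) (dyadI d (j + 1)) :=
  disjoint_left.2 fun _ hk hj => h (eq_of_mem_dyadI hk hj)

lemma pairwiseDisjoint_dyadI {d : ℕ} (s : Set (Fin (2 ^ d))) :
    s.PairwiseDisjoint fun k : Fin (2 ^ d) => dyadI d (k + 1) :=
  fun _ _ _ _ h => disjoint_dyadI (Fin.val_injective.ne h)

lemma exists_mem_dyadI (d : ℕ) {t : ℝ} (ht : t ∈ Ioc (0 : ℝ) 1) :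
    ∃ k : Fin (2 ^ d), t ∈ dyadI d (k + 1) := by
  obtain ⟨ht0, ht1⟩ := ht
  have h2d : (0 : ℝ) < 2 ^ d := by positivity
  set n := ⌈t * 2 ^ d⌉₊ with hn
  have hpos : 0 < n := Nat.ceil_pos.2 (by positivity)
  have hle : n ≤ 2 ^ d := Nat.ceil_le.2 (by push_cast; nlinarith)
  refine ⟨⟨n - 1, by omega⟩, ?_⟩
  have hcast : ((n - 1 : ℕ) : ℝ) = n - 1 := by rw [Nat.cast_sub hpos, Nat.cast_one]
  rw [dyadI_succ, hcast, sub_add_cancel, mem_Ioc, div_lt_iff₀ h2d, le_div_iff₀ h2d]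
  exact ⟨by linarith [Nat.ceil_lt_add_one (by positivity : 0 ≤ t * 2 ^ d)], Nat.le_ceil _⟩

lemma dyadI_subset_dyadI_div (N e j : ℕ) : dyadI (N + e) (j + 1) ⊆ dyadI N (j / 2 ^ e + 1) := by
  have hj : ((j / 2 ^ e : ℕ) : ℝ) * 2 ^ e ≤ j := by exact_mod_cast Nat.div_mul_le_self j (2 ^ e)
  have hj' : (j : ℝ) + 1 ≤ ((j / 2 ^ e : ℕ) + 1 : ℝ) * 2 ^ e := by
    have : j + 1 ≤ (j / 2 ^ e + 1) * 2 ^ e := by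
      nlinarith [Nat.div_add_mod j (2 ^ e), Nat.mod_lt j (Nat.two_pow_pos e)]
    exact_mod_cast this
  rw [dyadI_succ, dyadI_succ, pow_add, mul_comm, ← div_div, ← div_div]
  refine Ioc_subset_Ioc ?_ ?_
  · gcongr; rwa [le_div_iff₀ (by positivity)]
  · gcongr; rwa [div_le_iff₀ (by positivity)]

lemma dyadI_subset_or_disjoint {N M : ℕ} (hNM : N ≤ M) (j k : ℕ) :
    dyadI M (j + 1) ⊆ dyadI N (k + 1) ∨ Disjoint (dyadI M (j + 1)) (dyadI N (k + 1)) := by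
  obtain ⟨e, rfl⟩ := Nat.exists_eq_add_of_le hNM
  rcases eq_or_ne (j / 2 ^ e) k with h | h
  · exact Or.inl (h ▸ dyadI_subset_dyadI_div N e j)
  · exact Or.inr ((disjoint_dyadI h).mono_left (dyadI_subset_dyadI_div N e j))

lemma preimage_add_dyadI (d j k : ℕ) :
    (fun t => t + ((j : ℝ) - k) / 2 ^ d) ⁻¹' dyadI d (j + 1) = dyadI d (k + 1) := by
  rw [dyadI_succ, dyadI_succ, preimage_add_const_Ioc]
  congr 1 <;> ring

lemma dyadI_subset_biUnion {N : ℕ} {s : Finset (Fin (2 ^ N))} {k : Fin (2 ^ N)} (hk : k ∈ s) :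
    dyadI N (k + 1) ⊆ ⋃ k ∈ s, dyadI N (k + 1) :=
  subset_biUnion_of_mem (u := fun k : Fin (2 ^ N) => dyadI N (k + 1)) hk

open Classical in
lemma eq_biUnion_dyadI {M : ℕ} {X : Set ℝ}
    (hX : ∀ t ∈ X, ∃ N ≤ M, ∃ k : Fin (2 ^ N), t ∈ dyadI N (k + 1) ∧ dyadI N (k + 1) ⊆ X) :
    X = ⋃ p ∈ Finset.univ.filter fun p : Fin (2 ^ M) => dyadI M (p + 1) ⊆ X, dyadI M (p + 1) := by
  refine subset_antisymm ?_ (iUnion₂_subset fun p hp => (Finset.mem_filter.1 hp).2)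
  intro t ht
  obtain ⟨N, hNM, k, htk, hkX⟩ := hX t ht
  obtain ⟨p, htp⟩ := exists_mem_dyadI M (dyadI_subset_Ioc k htk)
  refine mem_biUnion (Finset.mem_filter.2 ⟨Finset.mem_univ p, ?_⟩) htp
  rcases dyadI_subset_or_disjoint hNM p k with h | h
  · exact h.trans hkX
  · exact absurd htk (disjoint_left.1 h htp)

lemma dyadI_subset_or_disjoint_biUnion {N M : ℕ} (hNM : N ≤ M) (s : Finset (Fin (2 ^ N)))
    (p : ℕ) : dyadI M (p + 1) ⊆ ⋃ k ∈ s, dyadI N (k + 1) ∨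
      Disjoint (dyadI M (p + 1)) (⋃ k ∈ s, dyadI N (k + 1)) := by
  by_cases h : ∃ k ∈ s, dyadI M (p + 1) ⊆ dyadI N (k + 1)
  · obtain ⟨k, hk, hpk⟩ := h
    exact Or.inl (hpk.trans (dyadI_subset_biUnion hk))
  · push Not at h
    exact Or.inr (disjoint_iUnion₂_right.2 fun k hk =>
      (dyadI_subset_or_disjoint hNM p k).resolve_left (h k hk))

open Classical in
/-- The paper's `g_π`, extended by the identity outside `(0,1]`. -/
noncomputable def dyadShift (d : ℕ) (π : Equiv.Perm (Fin (2 ^ d))) (t : ℝ) : ℝ :=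
  if h : ∃ k : Fin (2 ^ d), t ∈ dyadI d (k + 1) then
    t + ((π h.choose : ℕ) - (h.choose : ℕ) : ℝ) / 2 ^ d
  else t

section dyadShift

variable {d : ℕ} {π σ : Equiv.Perm (Fin (2 ^ d))} {t : ℝ}

lemma dyadShift_of_mem {k : Fin (2 ^ d)} (ht : t ∈ dyadI d (k + 1)) :
    dyadShift d π t = t + ((π k : ℕ) - (k : ℕ) : ℝ) / 2 ^ d := by
  have h : ∃ k : Fin (2 ^ d), t ∈ dyadI d (k + 1) := ⟨k, ht⟩
  have hk : h.choose = k := Fin.ext (eq_of_mem_dyadI h.choose_spec ht)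
  rw [dyadShift, dif_pos h, hk]

lemma dyadShift_of_notMem (ht : t ∉ Ioc (0 : ℝ) 1) : dyadShift d π t = t :=
  dif_neg fun ⟨k, hk⟩ => ht (dyadI_subset_Ioc k hk)

lemma dyadShift_mem {k : Fin (2 ^ d)} (ht : t ∈ dyadI d (k + 1)) :
    dyadShift d π t ∈ dyadI d (π k + 1) := by
  rw [dyadShift_of_mem ht]
  exact (preimage_add_dyadI d (π k) k).ge ht

lemma funext_dyadI (d : ℕ) {f g : ℝ → ℝ} (hout : ∀ t ∉ Ioc (0 : ℝ) 1, f t = g t)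
    (hin : ∀ k : Fin (2 ^ d), ∀ t ∈ dyadI d (k + 1), f t = g t) : f = g := by
  funext t
  by_cases ht : t ∈ Ioc (0 : ℝ) 1
  · obtain ⟨k, hk⟩ := exists_mem_dyadI d ht
    exact hin k t hk
  · exact hout t ht

lemma dyadShift_one : dyadShift d 1 = id :=
  funext_dyadI d (fun _ ht => dyadShift_of_notMem ht) fun _ _ ht => by
    simp [dyadShift_of_mem ht]

lemma dyadShift_mul : dyadShift d (π * σ) = dyadShift d π ∘ dyadShift d σ := by
  refine funext_dyadI d (fun t ht => ?_) fun k t ht => ?_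
  · simp only [Function.comp_apply, dyadShift_of_notMem ht]
  · rw [Function.comp_apply, dyadShift_of_mem (π := π) (dyadShift_mem (π := σ) ht),
      dyadShift_of_mem (π := σ) ht, dyadShift_of_mem (π := π * σ) ht, Equiv.Perm.mul_apply]
    ring

end dyadShift

lemma isDyadicPerm_iff {g : ℝ → ℝ} : IsDyadicPerm g ↔ ∃ d π, g = dyadShift d π := by
  constructor
  · rintro ⟨hout, d, π, hπ⟩
    refine ⟨d, π, funext_dyadI d (fun t ht => ?_) fun k t ht => ?_⟩
    · rw [hout t ht, dyadShift_of_notMem ht]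
    · rw [hπ k t ht, dyadShift_of_mem ht]
      ring
  · rintro ⟨d, π, rfl⟩
    refine ⟨fun t ht => dyadShift_of_notMem ht, d, π, fun k t ht => ?_⟩
    rw [dyadShift_of_mem ht]
    ring

/-- The permutation of the level-`d + e` intervals induced by `π`: writing `j = 2 ^ e * q + r`
with `r < 2 ^ e`, the `j`-th interval is sent to the `r`-th subinterval of the `π q`-th one. -/
def liftPerm {d : ℕ} (e : ℕ) (π : Equiv.Perm (Fin (2 ^ d))) : Equiv.Perm (Fin (2 ^ (d + e))) :=
  (finProdFinEquiv.trans (finCongr (pow_add 2 d e).symm)).permCongr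
    (π.prodCongr (Equiv.refl (Fin (2 ^ e))))

lemma div_two_pow_lt {d e : ℕ} (j : Fin (2 ^ (d + e))) : (j : ℕ) / 2 ^ e < 2 ^ d := by
  rw [Nat.div_lt_iff_lt_mul (Nat.two_pow_pos e), ← pow_add]
  exact j.2

lemma liftPerm_apply {d e : ℕ} (π : Equiv.Perm (Fin (2 ^ d))) (j : Fin (2 ^ (d + e))) :
    (liftPerm e π j : ℕ) = (j : ℕ) % 2 ^ e + 2 ^ e * π ⟨(j : ℕ) / 2 ^ e, div_two_pow_lt j⟩ :=
  rfl

lemma dyadShift_liftPerm {d : ℕ} (e : ℕ) (π : Equiv.Perm (Fin (2 ^ d))) :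
    dyadShift (d + e) (liftPerm e π) = dyadShift d π := by
  refine funext_dyadI (d + e) (fun t ht => ?_) fun j t ht => ?_
  · rw [dyadShift_of_notMem ht, dyadShift_of_notMem ht]
  set q : Fin (2 ^ d) := ⟨(j : ℕ) / 2 ^ e, div_two_pow_lt j⟩
  have hq : t ∈ dyadI d (q + 1) := dyadI_subset_dyadI_div d e j ht
  have hj : ((j : ℕ) : ℝ) = ((j : ℕ) % 2 ^ e : ℕ) + 2 ^ e * (q : ℕ) := by
    exact_mod_cast (Nat.mod_add_div (j : ℕ) (2 ^ e)).symm
  have hπj : ((liftPerm e π j : ℕ) : ℝ) = ((j : ℕ) % 2 ^ e : ℕ) + 2 ^ e * (π q : ℕ) := by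
    exact_mod_cast liftPerm_apply π j
  have hdiff : ((liftPerm e π j : ℕ) - (j : ℕ) : ℝ) = 2 ^ e * ((π q : ℕ) - (q : ℕ) : ℝ) := by
    linear_combination hπj - hj
  rw [dyadShift_of_mem ht, dyadShift_of_mem hq, hdiff, pow_add, mul_comm (2 ^ d : ℝ),
    mul_div_mul_left _ _ (by positivity)]

lemma exists_dyadShift_eq_of_le {d d' : ℕ} (h : d ≤ d') (π : Equiv.Perm (Fin (2 ^ d))) :
    ∃ π' : Equiv.Perm (Fin (2 ^ d')), dyadShift d' π' = dyadShift d π := by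
  obtain ⟨e, rfl⟩ := Nat.exists_eq_add_of_le h
  exact ⟨liftPerm e π, dyadShift_liftPerm e π⟩

lemma isMapGroup_isDyadicPerm : IsMapGroup {g | IsDyadicPerm g} := by
  simp only [isDyadicPerm_iff]
  refine ⟨⟨0, 1, dyadShift_one.symm⟩, ?_, ?_⟩
  · rintro _ ⟨d₁, π₁, rfl⟩ _ ⟨d₂, π₂, rfl⟩
    obtain ⟨π₁', h₁⟩ := exists_dyadShift_eq_of_le (le_max_left d₁ d₂) π₁
    obtain ⟨π₂', h₂⟩ := exists_dyadShift_eq_of_le (le_max_right d₁ d₂) π₂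
    exact ⟨max d₁ d₂, π₁' * π₂', by rw [dyadShift_mul, h₁, h₂]⟩
  · rintro _ ⟨d, π, rfl⟩
    refine ⟨dyadShift d π⁻¹, ⟨d, π⁻¹, rfl⟩, ?_, ?_⟩ <;>
      rw [← dyadShift_mul, ← dyadShift_one (d := d)] <;> simp

lemma IsMapGroup.fixing {𝔾 : Set (ℝ → ℝ)} (h𝔾 : IsMapGroup 𝔾) (A : Set ℝ) :
    IsMapGroup {g | g ∈ 𝔾 ∧ ∀ t ∉ A, g t = t} := by
  obtain ⟨hid, hcomp, hinv⟩ := h𝔾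
  refine ⟨⟨hid, fun _ _ => rfl⟩, fun g hg h hh => ⟨hcomp g hg.1 h hh.1, fun t ht => ?_⟩,
    fun g hg => ?_⟩
  · simp [hh.2 t ht, hg.2 t ht]
  · obtain ⟨g', hg', hgg', hg'g⟩ := hinv g hg.1
    refine ⟨g', ⟨hg', fun t ht => ?_⟩, hgg', hg'g⟩
    calc g' t = g' (g t) := by rw [hg.2 t ht]
      _ = t := congrFun hg'g t

lemma Iic_inter_Ioc_eq_biUnion_dyadI (M a : ℕ) :
    Iic ((a : ℝ) / 2 ^ M) ∩ Ioc 0 1 =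
      ⋃ p ∈ Finset.univ.filter fun p : Fin (2 ^ M) => (p : ℕ) < a, dyadI M (p + 1) := by
  have h2M : (0 : ℝ) < 2 ^ M := by positivity
  ext t
  simp only [mem_inter_iff, mem_Iic, mem_iUnion, Finset.mem_filter, Finset.mem_univ, true_and,
    exists_prop]
  constructor
  · rintro ⟨hta, ht01⟩
    obtain ⟨p, hp⟩ := exists_mem_dyadI M ht01
    rw [dyadI_succ] at hp
    have : ((p : ℕ) : ℝ) < a := (div_lt_div_iff_of_pos_right h2M).1 (hp.1.trans_le hta)
    exact ⟨p, by exact_mod_cast this, by rwa [dyadI_succ]⟩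
  · rintro ⟨p, hpa, hp⟩
    refine ⟨?_, dyadI_subset_Ioc p hp⟩
    rw [dyadI_succ] at hp
    have : ((p : ℕ) : ℝ) + 1 ≤ a := by exact_mod_cast hpa
    exact hp.2.trans (by gcongr)

lemma measure_Iic_div_two_pow {μ : Measure ℝ} (hμ : μ (Ioc 0 1)ᶜ = 0) (M a : ℕ) :
    μ (Iic ((a : ℝ) / 2 ^ M)) =
      ∑ p ∈ Finset.univ.filter fun p : Fin (2 ^ M) => (p : ℕ) < a, μ (dyadI M (p + 1)) := by
  rw [← measure_inter_conull hμ, Iic_inter_Ioc_eq_biUnion_dyadI,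
    measure_biUnion_finset (pairwiseDisjoint_dyadI _) fun _ _ => measurableSet_dyadI _ _]

lemma antitone_Iic_ceil_div_two_pow (x : ℝ) (N : ℕ) :
    Antitone fun n => Iic ((⌈x * 2 ^ (N + n)⌉₊ : ℝ) / 2 ^ (N + n)) := by
  refine antitone_nat_of_succ_le fun n => Iic_subset_Iic.2 ?_
  have hceil : (⌈x * 2 ^ (N + n + 1)⌉₊ : ℝ) ≤ 2 * ⌈x * 2 ^ (N + n)⌉₊ := by
    have := Nat.ceil_le.2 (show x * 2 ^ (N + n + 1) ≤ ((2 * ⌈x * 2 ^ (N + n)⌉₊ : ℕ) : ℝ) by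
      rw [pow_succ]; push_cast
      nlinarith [Nat.le_ceil (x * 2 ^ (N + n))])
    exact_mod_cast this
  calc (⌈x * 2 ^ (N + n + 1)⌉₊ : ℝ) / 2 ^ (N + n + 1)
      ≤ 2 * ⌈x * 2 ^ (N + n)⌉₊ / 2 ^ (N + n + 1) := by gcongr
    _ = ⌈x * 2 ^ (N + n)⌉₊ / 2 ^ (N + n) := by rw [pow_succ]; field_simp

lemma iInter_Iic_ceil_div_two_pow {x : ℝ} (hx : 0 ≤ x) (N : ℕ) :
    ⋂ n, Iic ((⌈x * 2 ^ (N + n)⌉₊ : ℝ) / 2 ^ (N + n)) = Iic x := by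
  ext t
  simp only [mem_iInter, mem_Iic]
  refine ⟨fun h => le_of_not_gt fun hxt => ?_, fun htx n => ?_⟩
  · obtain ⟨n, hn⟩ := exists_pow_lt_of_lt_one (sub_pos.2 hxt) one_half_lt_one
    have h2 : (0 : ℝ) < 2 ^ (N + n) := by positivity
    have hceil := Nat.ceil_lt_add_one (mul_nonneg hx h2.le)
    have hpow : (1 / 2 : ℝ) ^ (N + n) ≤ (1 / 2) ^ n := pow_le_pow_of_le_one (by norm_num)
      (by norm_num) (Nat.le_add_left n N)
    have : (⌈x * 2 ^ (N + n)⌉₊ : ℝ) / 2 ^ (N + n) < x + (1 / 2) ^ (N + n) := by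
      rw [div_lt_iff₀ h2, add_mul, div_pow, one_pow, one_div_mul_cancel h2.ne']
      exact hceil
    linarith [h n]
  · have h2 : (0 : ℝ) < 2 ^ (N + n) := by positivity
    exact htx.trans ((le_div_iff₀ h2).2 (Nat.le_ceil _))

lemma measure_ext_of_dyadI {μ ν : Measure ℝ} [IsFiniteMeasure μ] (hμ : μ (Ioc 0 1)ᶜ = 0)
    (hν : ν (Ioc 0 1)ᶜ = 0) (N : ℕ)
    (h : ∀ M, N ≤ M → ∀ p : Fin (2 ^ M), μ (dyadI M (p + 1)) = ν (dyadI M (p + 1))) :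
    μ = ν := by
  have hdyadic : ∀ n a : ℕ, μ (Iic ((a : ℝ) / 2 ^ (N + n))) = ν (Iic ((a : ℝ) / 2 ^ (N + n))) :=
    fun n a => by
      rw [measure_Iic_div_two_pow hμ, measure_Iic_div_two_pow hν]
      exact Finset.sum_congr rfl fun p _ => h _ (Nat.le_add_right N n) p
  refine Measure.ext_of_Iic μ ν fun x => ?_
  rcases le_or_gt x 0 with hx | hx
  · have hsub : Iic x ⊆ (Ioc 0 1)ᶜ := fun t ht ht' => not_lt.2 (le_trans ht hx) ht'.1
    rw [measure_mono_null hsub hμ, measure_mono_null hsub hν]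
  · have hanti := antitone_Iic_ceil_div_two_pow x N
    rw [← iInter_Iic_ceil_div_two_pow hx.le N,
      hanti.measure_iInter (fun _ => nullMeasurableSet_Iic) ⟨0, measure_ne_top μ _⟩,
      hanti.measure_iInter (fun _ => nullMeasurableSet_Iic) ⟨0, hdyadic 0 _ ▸ measure_ne_top μ _⟩]
    simp only [hdyadic]

lemma volume_inter_dyadI_eq_of_invariant {M : ℕ} {A B : Set ℝ} {p q : Fin (2 ^ M)}
    (hp : dyadI M (p + 1) ⊆ A) (hq : dyadI M (q + 1) ⊆ A)
    (hinv : ∀ g, IsDyadicPerm g → (∀ t ∉ A, g t = t) → g ⁻¹' B = B) :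
    volume (dyadI M (p + 1) ∩ B) = volume (dyadI M (q + 1) ∩ B) := by
  have hswap : ∀ t ∉ A, dyadShift M (Equiv.swap p q) t = t := by
    intro t ht
    by_cases ht01 : t ∈ Ioc (0 : ℝ) 1
    · obtain ⟨k, hk⟩ := exists_mem_dyadI M ht01
      have hkp : k ≠ p := by rintro rfl; exact ht (hp hk)
      have hkq : k ≠ q := by rintro rfl; exact ht (hq hk)
      rw [dyadShift_of_mem hk, Equiv.swap_apply_of_ne_of_ne hkp hkq, sub_self, zero_div,
        add_zero]
    · exact dyadShift_of_notMem ht01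
  have hB := hinv _ (isDyadicPerm_iff.2 ⟨M, _, rfl⟩) hswap
  have hqB : dyadI M (q + 1) ∩ B =
      (fun t => t + ((p : ℕ) - (q : ℕ) : ℝ) / 2 ^ M) ⁻¹' (dyadI M (p + 1) ∩ B) := by
    rw [preimage_inter, preimage_add_dyadI]
    ext t
    refine and_congr_right fun ht => ?_
    calc t ∈ B ↔ t ∈ dyadShift M (Equiv.swap p q) ⁻¹' B := by rw [hB]
      _ ↔ _ := by rw [mem_preimage, dyadShift_of_mem ht, Equiv.swap_apply_right]; rfl
  rw [hqB, measure_preimage_add_right]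

lemma measure_eq_sum_dyadI_inter (μ : Measure ℝ) {M : ℕ} {S : Finset (Fin (2 ^ M))} {C : Set ℝ}
    (hC : MeasurableSet C) (hCS : C ⊆ ⋃ q ∈ S, dyadI M (q + 1)) :
    μ C = ∑ q ∈ S, μ (dyadI M (q + 1) ∩ C) := by
  conv_lhs => rw [← inter_eq_right.2 hCS, iUnion₂_inter]
  exact measure_biUnion_finset
    (fun p hp q hq hpq => (pairwiseDisjoint_dyadI _ hp hq hpq).mono inter_subset_left
      inter_subset_left)
    fun q _ => (measurableSet_dyadI _ _).inter hC

lemma volume_mul_volume_inter_dyadI {M : ℕ} {A B : Set ℝ} {S : Finset (Fin (2 ^ M))}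
    (hA : A = ⋃ q ∈ S, dyadI M (q + 1)) (hB : MeasurableSet B) (hBA : B ⊆ A)
    (hconst : ∀ q ∈ S, ∀ p ∈ S, volume (dyadI M (q + 1) ∩ B) = volume (dyadI M (p + 1) ∩ B))
    {p : Fin (2 ^ M)} (hp : p ∈ S) :
    volume A * volume (dyadI M (p + 1) ∩ B) = volume B * volume (dyadI M (p + 1) ∩ A) := by
  have hAmeas : MeasurableSet A := hA ▸ S.measurableSet_biUnion fun _ _ => measurableSet_dyadI _ _
  have hpA : dyadI M (p + 1) ⊆ A := hA ▸ dyadI_subset_biUnion hp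
  have hvA : volume A = S.card * volume (dyadI M (p + 1)) := by
    have hq : ∀ q ∈ S, volume (dyadI M ((q : ℕ) + 1) ∩ A) = volume (dyadI M ((p : ℕ) + 1)) :=
      fun q hq => by
        rw [inter_eq_left.2 (hA ▸ dyadI_subset_biUnion hq), volume_dyadI, volume_dyadI]
    rw [measure_eq_sum_dyadI_inter volume hAmeas hA.le, Finset.sum_congr rfl hq,
      Finset.sum_const, nsmul_eq_mul]
  have hvB : volume B = S.card * volume (dyadI M (p + 1) ∩ B) := by
    rw [measure_eq_sum_dyadI_inter volume hB (hBA.trans hA.le),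
      Finset.sum_congr rfl fun q hq => hconst q hq p hp, Finset.sum_const, nsmul_eq_mul]
  rw [hvA, hvB, inter_eq_left.2 hpA]
  ring

theorem volume_eq_zero_or_volume_diff_eq_zero_of_invariant {N : ℕ} {A B : Set ℝ}
    (s : Finset (Fin (2 ^ N))) (hA : A = ⋃ k ∈ s, dyadI N (k + 1)) (hB : MeasurableSet B)
    (hBA : B ⊆ A) (hinv : ∀ g, IsDyadicPerm g → (∀ t ∉ A, g t = t) → g ⁻¹' B = B) :
    volume B = 0 ∨ volume (A \ B) = 0 := by
  classical
  have hA01 : A ⊆ Ioc 0 1 := hA ▸ iUnion₂_subset fun k _ => dyadI_subset_Ioc k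
  have hAfin : volume A ≠ ∞ := ne_top_of_le_ne_top (by simp) (measure_mono hA01)
  have hBfin : volume B ≠ ∞ := ne_top_of_le_ne_top hAfin (measure_mono hBA)
  have : IsFiniteMeasure (volume.restrict B) := isFiniteMeasure_restrict.2 hBfin
  have : IsFiniteMeasure (volume A • volume.restrict B) := Measure.smul_finite _ hAfin
  have hnull : ∀ C ⊆ A, volume.restrict C (Ioc 0 1)ᶜ = 0 := fun C hC => by
    rw [Measure.restrict_apply measurableSet_Ioc.compl,
      (disjoint_compl_left.mono_right (hC.trans hA01)).inter_eq, measure_empty]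
  have hμ : volume A • volume.restrict B = volume B • volume.restrict A := by
    refine measure_ext_of_dyadI (by simp [hnull B hBA]) (by simp [hnull A subset_rfl]) N
      fun M hM p => ?_
    simp only [Measure.smul_apply, Measure.restrict_apply (measurableSet_dyadI _ _), smul_eq_mul]
    have hcover := eq_biUnion_dyadI (M := M) (X := A) fun t ht => by
      obtain ⟨k, hk, htk⟩ := mem_iUnion₂.1 (hA ▸ ht)
      exact ⟨N, hM, k, htk, hA ▸ dyadI_subset_biUnion hk⟩
    rcases hA ▸ dyadI_subset_or_disjoint_biUnion hM s p with hpA | hpA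
    · exact volume_mul_volume_inter_dyadI hcover hB hBA (fun q hq p hp =>
        volume_inter_dyadI_eq_of_invariant (Finset.mem_filter.1 hq).2 (Finset.mem_filter.1 hp).2
          hinv) (Finset.mem_filter.2 ⟨Finset.mem_univ p, hpA⟩)
    · rw [hpA.inter_eq, (hpA.mono_right hBA).inter_eq, measure_empty, mul_zero, mul_zero]
  have hBB : volume A * volume B = volume B * volume B := by
    simpa [Measure.restrict_apply hB, inter_eq_self_of_subset_left hBA] using
      congrArg (fun μ : Measure ℝ => μ B) hμ
  refine (eq_or_ne (volume B) 0).imp id fun h0 => ?_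
  rw [measure_sdiff hBA hB.nullMeasurableSet hBfin, (ENNReal.mul_left_inj h0 hBfin).1 hBB,
    tsub_self]

lemma finiteLocallyErgodicDyad_of_eq_biUnion {E F : Set ℝ} (hFE : F ⊆ E) (hF : 0 < volume F)
    {N : ℕ} (s : Finset (Fin (2 ^ N))) (hFs : F = ⋃ k ∈ s, dyadI N (k + 1)) :
    FiniteLocallyErgodicDyad {g | IsDyadicPerm g ∧ ∀ t ∉ E, g t = t} F := by
  refine ⟨hF, N, ⟨s, hFs⟩, fun M _ l m _ hlm => ?_⟩
  set A := dyadI M ((l : ℕ) + 1) ∪ dyadI M ((m : ℕ) + 1)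
  refine ⟨{g | IsDyadicPerm g ∧ ∀ t ∉ A, g t = t},
    fun g hg => ⟨hg.1, fun t ht => hg.2 t fun htA => ht (hFE (hlm htA))⟩,
    isMapGroup_isDyadicPerm.fixing A, fun g hg => hg.2, fun B hB hBA hinv => ?_⟩
  exact volume_eq_zero_or_volume_diff_eq_zero_of_invariant {l, m} (by simp [A]) hB hBA
    fun g hg hgA => hinv g ⟨hg, hgA⟩

/-- every nonempty `E ∈ 𝒪((0,1])` is locally ergodic with respect to the group
`Perm^dyad_E` of dyadic permutations which are the identity on `E^c`. -/
theorem stmt12 (E : Set ℝ) (hE : IsDyadOpen E) (hne : E.Nonempty) :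
    LocallyErgodicDyad {g : ℝ → ℝ | IsDyadicPerm g ∧ ∀ t ∉ E, g t = t} E := by
  obtain ⟨u, hu, rfl⟩ := hE.resolve_left hne.ne_empty
  choose N k hk using hu
  refine ⟨accumulate u, monotone_accumulate, fun j => ?_, iUnion_accumulate⟩
  have hpos : 0 < volume (u j) := by
    rw [hk j, volume_dyadI]
    exact ENNReal.ofReal_pos.2 (by positivity)
  refine finiteLocallyErgodicDyad_of_eq_biUnion (accumulate_subset_iUnion j)
    (hpos.trans_le (measure_mono subset_accumulate)) _
    (eq_biUnion_dyadI (M := (Finset.range (j + 1)).sup N) fun t ht => ?_)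
  obtain ⟨i, hij, hti⟩ := mem_accumulate.1 ht
  exact ⟨N i, Finset.le_sup (Finset.mem_range.2 (Nat.lt_succ_of_le hij)), k i, hk i ▸ hti,
    hk i ▸ fun x hx => mem_accumulate.2 ⟨i, hij, hx⟩⟩
end
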